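/- For every k ≥ 0 and every z ∈ ℝ^{np}, writing ẑ = V_∞ z, one has ‖V_∞ Ṽ(k)^{-1} ∇f(z)‖ ≤ v ṽ² √n κ₃ σ_R^k ‖∇f(z)‖ + nL ‖z − ẑ‖_C + nL ‖ẑ − x*_vec‖. -/

import Mathlib

open Matrix Filter
open scoped Kronecker

noncomputable section

/-- Euclidean norm on `ι → ℝ`. -/
def eucNorm {ι : Type*} [Fintype ι] (z : ι → ℝ) : ℝ := Real.sqrt (∑ i, z i ^ 2)

/-- Spectral norm (operator 2-norm) of a square real matrix. -/
def specNorm {ι : Type*} [Fintype ι] (A : Matrix ι ι ℝ) : ℝ :=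
  sSup {c : ℝ | ∃ z : ι → ℝ, eucNorm z ≤ 1 ∧ c = eucNorm (A.mulVec z)}

/-- Matrix norm induced by a vector norm `N`: `sup_{z ≠ 0} N (A z) / N z`. -/
def opNorm {ι : Type*} [Fintype ι] (N : (ι → ℝ) → ℝ) (A : Matrix ι ι ℝ) : ℝ :=
  sSup {c : ℝ | ∃ z : ι → ℝ, z ≠ 0 ∧ c = N (A.mulVec z) / N z}

/-- `g` is the gradient of `f : ℝ^p → ℝ`. -/
def IsGradient {p : ℕ} (f : (Fin p → ℝ) → ℝ) (g : (Fin p → ℝ) → Fin p → ℝ) : Prop :=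
  ∀ x, HasFDerivAt f (∑ j, g x j • (ContinuousLinearMap.proj j : (Fin p → ℝ) →L[ℝ] ℝ)) x

/-- `R = R̄ ⊗ I_p`. -/
def RK (n p : ℕ) (Rb : Matrix (Fin n) (Fin n) ℝ) :
    Matrix (Fin n × Fin p) (Fin n × Fin p) ℝ :=
  Rb ⊗ₖ (1 : Matrix (Fin p) (Fin p) ℝ)

/-- `V_∞ = (1_n π^T) ⊗ I_p`. -/
def VinfK (n p : ℕ) (π : Fin n → ℝ) :
    Matrix (Fin n × Fin p) (Fin n × Fin p) ℝ :=
  (Matrix.of (fun _ j => π j) : Matrix (Fin n) (Fin n) ℝ) ⊗ₖ (1 : Matrix (Fin p) (Fin p) ℝ)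

/-- `V(k) = R̄^k ⊗ I_p`. -/
def VK (n p : ℕ) (Rb : Matrix (Fin n) (Fin n) ℝ) (k : ℕ) :
    Matrix (Fin n × Fin p) (Fin n × Fin p) ℝ :=
  (Rb ^ k) ⊗ₖ (1 : Matrix (Fin p) (Fin p) ℝ)

/-- `Ṽ(k)⁻¹ = diag(((R̄^k)_{11})⁻¹, …, ((R̄^k)_{nn})⁻¹) ⊗ I_p`. -/
def VtinvK (n p : ℕ) (Rb : Matrix (Fin n) (Fin n) ℝ) (k : ℕ) :
    Matrix (Fin n × Fin p) (Fin n × Fin p) ℝ :=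
  Matrix.diagonal (fun q => ((Rb ^ k) q.1 q.1)⁻¹)

/-- `∇f(z) = (∇f_1(z_1), …, ∇f_n(z_n))` block-wise. -/
def gradf {n p : ℕ} (g : Fin n → (Fin p → ℝ) → Fin p → ℝ) (z : Fin n × Fin p → ℝ) :
    Fin n × Fin p → ℝ :=
  fun q => g q.1 (fun j => z (q.1, j)) q.2

/-- `x*_vec = 1_n ⊗ x*`. -/
def starVec (n p : ℕ) (xstar : Fin p → ℝ) : Fin n × Fin p → ℝ := fun q => xstar q.2

end

/-!
Split `Ṽ(k)⁻¹ = Ṽ_∞⁻¹ + (Ṽ(k)⁻¹ - Ṽ_∞⁻¹)` with `Ṽ_∞ = diag(π) ⊗ I_p`. The first part gives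
`V_∞ Ṽ_∞⁻¹ ∇f(z) = 1_n ⊗ Σ_j ∇f_j(z_j)`; since `Σ_j ∇f_j(x*) = 0`, the Lipschitz bound, applied
between `z_j` and the average `ẑ_j`, and then between `ẑ_j` and `x*`, yields the two `nL`-terms.

For the second part, `(R - V_∞)^k = V(k) - V_∞` for `k ≥ 1` (as `R V_∞ = V_∞ R = V_∞² = V_∞`)
gives `|(R̄^k)_{ij} - π_j| ≤ κ₃ σ_R^k`. Hence `R̄^k → 1_n πᵀ`, so `v` and `ṽ` are suprema of bounded
families (an unbounded `⨆` would be `0`), `‖V_∞‖ ≤ v`, `1/π_i ≤ ṽ`, and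
`|1/(R̄^k)_{ii} - 1/π_i| ≤ ṽ² κ₃ σ_R^k`.
-/

open Topology

section EucNorm

variable {ι : Type*} [Fintype ι]

theorem eucNorm_eq_norm_toLp (z : ι → ℝ) : eucNorm z = ‖WithLp.toLp 2 z‖ := by
  simp [eucNorm, EuclideanSpace.norm_eq]

theorem eucNorm_nonneg (z : ι → ℝ) : 0 ≤ eucNorm z := Real.sqrt_nonneg _

theorem eucNorm_pos {z : ι → ℝ} (hz : z ≠ 0) : 0 < eucNorm z := by
  simpa [eucNorm_eq_norm_toLp] using hz

theorem eucNorm_add_le (z w : ι → ℝ) : eucNorm (z + w) ≤ eucNorm z + eucNorm w := by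
  simpa only [eucNorm_eq_norm_toLp, WithLp.toLp_add] using norm_add_le _ _

theorem eucNorm_sum_le {κ : Type*} (s : Finset κ) (z : κ → ι → ℝ) :
    eucNorm (∑ j ∈ s, z j) ≤ ∑ j ∈ s, eucNorm (z j) := by
  simpa only [eucNorm_eq_norm_toLp, WithLp.toLp_sum] using norm_sum_le _ _

theorem abs_apply_le_eucNorm (z : ι → ℝ) (q : ι) : |z q| ≤ eucNorm z := by
  simpa [eucNorm_eq_norm_toLp] using PiLp.norm_apply_le (WithLp.toLp 2 z) q

theorem eucNorm_single_one [DecidableEq ι] (q : ι) : eucNorm (Pi.single q (1 : ℝ)) = 1 := by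
  simp [eucNorm_eq_norm_toLp, PiLp.toLp_single]

theorem continuous_eucNorm : Continuous (eucNorm : (ι → ℝ) → ℝ) := by
  unfold eucNorm; fun_prop

theorem one_le_of_eucNorm_le_of_le_mul_eucNorm [Nonempty ι] {N : (ι → ℝ) → ℝ} {κ : ℝ}
    (hN : ∀ z, eucNorm z ≤ N z) (hNκ : ∀ z, N z ≤ κ * eucNorm z) : 1 ≤ κ := by
  classical
  obtain ⟨q⟩ := ‹Nonempty ι›
  simpa [eucNorm_single_one] using (hN (Pi.single q 1)).trans (hNκ _)

theorem eucNorm_mulVec_le_frobenius (A : Matrix ι ι ℝ) (z : ι → ℝ) :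
    eucNorm (A *ᵥ z) ≤ √(∑ q, ∑ r, A q r ^ 2) * eucNorm z := by
  rw [eucNorm, eucNorm, ← Real.sqrt_mul (by positivity), Finset.sum_mul]
  exact Real.sqrt_le_sqrt <| Finset.sum_le_sum fun q _ =>
    Finset.sum_mul_sq_le_sq_mul_sq _ (A q) z

theorem eucNorm_diagonal_mulVec_le [DecidableEq ι] {d : ι → ℝ} {M : ℝ}
    (hd : ∀ q, |d q| ≤ M) (z : ι → ℝ) : eucNorm (diagonal d *ᵥ z) ≤ M * eucNorm z := by
  rcases isEmpty_or_nonempty ι with hι | ⟨⟨q⟩⟩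
  · simp [eucNorm]
  have hM : 0 ≤ M := (abs_nonneg _).trans (hd q)
  rw [eucNorm, eucNorm, ← Real.sqrt_sq hM, ← Real.sqrt_mul (sq_nonneg M), Finset.mul_sum]
  refine Real.sqrt_le_sqrt <| Finset.sum_le_sum fun q _ => ?_
  rw [mulVec_diagonal, mul_pow]
  exact mul_le_mul_of_nonneg_right (sq_le_sq' (abs_le.1 (hd q)).1 (abs_le.1 (hd q)).2)
    (sq_nonneg _)

theorem eucNorm_mulVec_diagonal_inv_sub_inv_le [DecidableEq ι]
    {M : Matrix ι ι ℝ} {a b : ι → ℝ} {v w c : ℝ} (hM : ∀ z, eucNorm (M *ᵥ z) ≤ v * eucNorm z)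
    (hv : 0 ≤ v) (ha : ∀ q, a q ≠ 0) (hb : ∀ q, b q ≠ 0)
    (ha' : ∀ q, |(a q)⁻¹| ≤ w) (hb' : ∀ q, |(b q)⁻¹| ≤ w) (hab : ∀ q, |b q - a q| ≤ c)
    (z : ι → ℝ) :
    eucNorm (M *ᵥ (diagonal (fun q => (a q)⁻¹ - (b q)⁻¹) *ᵥ z)) ≤ v * w ^ 2 * c * eucNorm z := by
  have hd : ∀ q, |(a q)⁻¹ - (b q)⁻¹| ≤ w * c * w := fun q => by
    have hw : 0 ≤ w := (abs_nonneg _).trans (ha' q)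
    rw [inv_sub_inv' (ha q) (hb q), abs_mul, abs_mul]
    exact mul_le_mul (mul_le_mul (ha' q) (hab q) (abs_nonneg _) hw) (hb' q) (abs_nonneg _)
      (mul_nonneg hw ((abs_nonneg _).trans (hab q)))
  calc _ ≤ v * (w * c * w * eucNorm z) :=
        (hM _).trans (mul_le_mul_of_nonneg_left (eucNorm_diagonal_mulVec_le hd z) hv)
    _ = _ := by ring

end EucNorm

section Blocks

variable {ι κ : Type*} [Fintype ι] [Fintype κ]

theorem eucNorm_of_apply_eq_snd {w : ι × κ → ℝ} {c : κ → ℝ} (hw : ∀ q, w q = c q.2) :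
    eucNorm w = √(Fintype.card ι) * eucNorm c := by
  rw [eucNorm, eucNorm, ← Real.sqrt_mul (by positivity), Fintype.sum_prod_type]
  simp [hw, Finset.mul_sum]

theorem sum_eucNorm_blocks_le (w : ι × κ → ℝ) :
    ∑ j, eucNorm (fun t => w (j, t)) ≤ √(Fintype.card ι) * eucNorm w := by
  have hcs := Finset.sum_mul_sq_le_sq_mul_sq Finset.univ (fun _ => (1 : ℝ))
    (fun j => eucNorm (fun t => w (j, t)))
  have hsq : ∀ j, eucNorm (fun t => w (j, t)) ^ 2 = ∑ t, w (j, t) ^ 2 := fun j =>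
    Real.sq_sqrt (by positivity)
  simp only [one_pow, Finset.sum_const, Finset.card_univ, nsmul_eq_mul, mul_one, one_mul,
    hsq] at hcs
  rw [eucNorm, ← Real.sqrt_mul (by positivity), Fintype.sum_prod_type]
  exact Real.le_sqrt_of_sq_le hcs

end Blocks

section SpecNorm

variable {ι : Type*} [Fintype ι]

theorem bddAbove_specNorm_set (A : Matrix ι ι ℝ) :
    BddAbove {c : ℝ | ∃ z : ι → ℝ, eucNorm z ≤ 1 ∧ c = eucNorm (A *ᵥ z)} := by
  refine ⟨√(∑ q, ∑ r, A q r ^ 2), ?_⟩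
  rintro _ ⟨z, hz, rfl⟩
  simpa using (eucNorm_mulVec_le_frobenius A z).trans
    (mul_le_mul_of_nonneg_left hz (Real.sqrt_nonneg _))

theorem specNorm_nonneg (A : Matrix ι ι ℝ) : 0 ≤ specNorm A :=
  Real.sSup_nonneg <| by rintro _ ⟨z, -, rfl⟩; exact eucNorm_nonneg _

theorem specNorm_le_frobenius (A : Matrix ι ι ℝ) : specNorm A ≤ √(∑ q, ∑ r, A q r ^ 2) :=
  Real.sSup_le (by
    rintro _ ⟨z, hz, rfl⟩
    simpa using (eucNorm_mulVec_le_frobenius A z).trans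
      (mul_le_mul_of_nonneg_left hz (Real.sqrt_nonneg _))) (Real.sqrt_nonneg _)

theorem eucNorm_mulVec_le_specNorm (A : Matrix ι ι ℝ) (z : ι → ℝ) :
    eucNorm (A *ᵥ z) ≤ specNorm A * eucNorm z := by
  rcases eq_or_ne z 0 with rfl | hz
  · simp [eucNorm]
  · have h := eucNorm_pos hz
    have hunit : eucNorm ((eucNorm z)⁻¹ • z) = 1 := by
      rw [eucNorm_eq_norm_toLp, WithLp.toLp_smul, norm_smul, ← eucNorm_eq_norm_toLp,
        Real.norm_of_nonneg (inv_nonneg.2 h.le), inv_mul_cancel₀ h.ne']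
    have hle := le_csSup (bddAbove_specNorm_set A) ⟨_, hunit.le, rfl⟩
    rw [mulVec_smul, eucNorm_eq_norm_toLp, WithLp.toLp_smul, norm_smul, ← eucNorm_eq_norm_toLp,
      Real.norm_of_nonneg (inv_nonneg.2 h.le), inv_mul_le_iff₀ h] at hle
    exact hle.trans_eq (mul_comm _ _)

theorem abs_apply_le_of_eucNorm_mulVec_le [DecidableEq ι] {A : Matrix ι ι ℝ} {C : ℝ}
    (hA : ∀ z, eucNorm (A *ᵥ z) ≤ C * eucNorm z) (q r : ι) : |A q r| ≤ C := by
  simpa [mulVec_single_one, eucNorm_single_one] using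
    (abs_apply_le_eucNorm _ q).trans (hA (Pi.single r 1))

theorem abs_apply_le_specNorm [DecidableEq ι] (A : Matrix ι ι ℝ) (q r : ι) :
    |A q r| ≤ specNorm A :=
  abs_apply_le_of_eucNorm_mulVec_le (eucNorm_mulVec_le_specNorm A) q r

theorem bddAbove_range_specNorm_of_tendsto {A : ℕ → Matrix ι ι ℝ} {B : Matrix ι ι ℝ}
    (hA : Tendsto A atTop (𝓝 B)) : BddAbove (Set.range fun k => specNorm (A k)) := by
  have hfrob : Continuous fun M : Matrix ι ι ℝ => √(∑ q, ∑ r, M q r ^ 2) :=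
    (continuous_finsetSum _ fun q _ => continuous_finsetSum _ fun r _ =>
      (continuous_id.matrix_elem q r).pow 2).sqrt
  obtain ⟨M, hM⟩ := ((hfrob.tendsto B).comp hA).bddAbove_range
  exact ⟨M, by rintro _ ⟨k, rfl⟩; exact (specNorm_le_frobenius _).trans (hM ⟨k, rfl⟩)⟩

theorem eucNorm_mulVec_le_of_tendsto {A : ℕ → Matrix ι ι ℝ} {B : Matrix ι ι ℝ} {C : ℝ}
    (hA : Tendsto A atTop (𝓝 B)) (hC : ∀ k, specNorm (A k) ≤ C) (z : ι → ℝ) :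
    eucNorm (B *ᵥ z) ≤ C * eucNorm z := by
  have hlim : Tendsto (fun k => eucNorm (A k *ᵥ z)) atTop (𝓝 (eucNorm (B *ᵥ z))) :=
    (continuous_eucNorm.comp (continuous_id.matrix_mulVec continuous_const)).tendsto B |>.comp hA
  exact le_of_tendsto' hlim fun k => (eucNorm_mulVec_le_specNorm _ z).trans
    (mul_le_mul_of_nonneg_right (hC k) (eucNorm_nonneg z))

end SpecNorm

section OpNorm

variable {ι : Type*} [Fintype ι] {N : (ι → ℝ) → ℝ} {κ : ℝ}

theorem opNorm_nonneg (hN : ∀ z, eucNorm z ≤ N z) (A : Matrix ι ι ℝ) : 0 ≤ opNorm N A :=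
  Real.sSup_nonneg <| by
    rintro _ ⟨z, -, rfl⟩
    exact div_nonneg ((eucNorm_nonneg _).trans (hN _)) ((eucNorm_nonneg _).trans (hN _))

variable (hN : ∀ z, eucNorm z ≤ N z) (hNκ : ∀ z, N z ≤ κ * eucNorm z)
include hN hNκ

theorem le_opNorm_mul (A : Matrix ι ι ℝ) (z : ι → ℝ) : N (A *ᵥ z) ≤ opNorm N A * N z := by
  rcases eq_or_ne z 0 with rfl | hz
  · have hN0 : N 0 = 0 :=
      le_antisymm (by simpa [eucNorm] using hNκ 0) (by simpa [eucNorm] using hN 0)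
    simp [hN0]
  have hpos : ∀ {w : ι → ℝ}, w ≠ 0 → 0 < N w := fun hw => (eucNorm_pos hw).trans_le (hN _)
  have hbdd : BddAbove {c : ℝ | ∃ w : ι → ℝ, w ≠ 0 ∧ c = N (A *ᵥ w) / N w} := by
    refine ⟨|κ| * √(∑ q, ∑ r, A q r ^ 2), ?_⟩
    rintro _ ⟨w, hw, rfl⟩
    rw [div_le_iff₀ (hpos hw)]
    calc N (A *ᵥ w) ≤ |κ| * eucNorm (A *ᵥ w) :=
          (hNκ _).trans (mul_le_mul_of_nonneg_right (le_abs_self κ) (eucNorm_nonneg _))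
      _ ≤ |κ| * (√(∑ q, ∑ r, A q r ^ 2) * N w) := by
          gcongr
          exact (eucNorm_mulVec_le_frobenius A w).trans
            (mul_le_mul_of_nonneg_left (hN w) (Real.sqrt_nonneg _))
      _ = _ := by ring
  have hle := le_csSup hbdd ⟨z, hz, rfl⟩
  rwa [div_le_iff₀ (hpos hz)] at hle

theorem eucNorm_pow_mulVec_le [DecidableEq ι] (A : Matrix ι ι ℝ) (k : ℕ) (z : ι → ℝ) :
    eucNorm (A ^ k *ᵥ z) ≤ κ * opNorm N A ^ k * eucNorm z := by
  have hpow : ∀ k z, N (A ^ k *ᵥ z) ≤ opNorm N A ^ k * N z := by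
    intro k
    induction k with
    | zero => simp
    | succ k ih =>
      intro z
      rw [pow_succ', ← mulVec_mulVec, pow_succ', mul_assoc]
      exact (le_opNorm_mul hN hNκ A _).trans
        (mul_le_mul_of_nonneg_left (ih z) (opNorm_nonneg hN A))
  calc eucNorm (A ^ k *ᵥ z) ≤ opNorm N A ^ k * N z := (hN _).trans (hpow k z)
    _ ≤ opNorm N A ^ k * (κ * eucNorm z) :=
        mul_le_mul_of_nonneg_left (hNκ z) (pow_nonneg (opNorm_nonneg hN A) k)
    _ = κ * opNorm N A ^ k * eucNorm z := by ring

end OpNorm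

theorem sub_pow_eq_pow_sub_of_mul_eq_self {R : Type*} [Ring R] {a e : R} (hae : a * e = e)
    (hea : e * a = e) (hee : e * e = e) {k : ℕ} (hk : k ≠ 0) : (a - e) ^ k = a ^ k - e := by
  have hpow : ∀ m : ℕ, a ^ m * e = e := fun m => by
    induction m with
    | zero => rw [pow_zero, one_mul]
    | succ m ih => rw [pow_succ, mul_assoc, hae, ih]
  obtain ⟨m, rfl⟩ := Nat.exists_eq_succ_of_ne_zero hk
  induction m with
  | zero => simp
  | succ m ih =>
    rw [pow_succ, ih (Nat.succ_ne_zero m), sub_mul, mul_sub, mul_sub, ← pow_succ, hpow, hea, hee]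
    abel

theorem Matrix.kronecker_one_pow {α l m : Type*} [Semiring α] [Fintype l] [DecidableEq l]
    [Fintype m] [DecidableEq m] (A : Matrix l l α) (k : ℕ) :
    (A ⊗ₖ (1 : Matrix m m α)) ^ k = (A ^ k) ⊗ₖ 1 := by
  simp only [kronecker_one, ← blockDiagonal_pow]
  rfl

theorem Matrix.continuous_kronecker_one {α l m : Type*} [Semiring α] [TopologicalSpace α]
    [ContinuousMul α] [DecidableEq m] :
    Continuous fun A : Matrix l l α => A ⊗ₖ (1 : Matrix m m α) :=
  continuous_pi fun q => continuous_pi fun r =>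
    (continuous_id.matrix_elem q.1 r.1).mul continuous_const

theorem Matrix.sub_kronecker {α l m n' p' : Type*} [NonUnitalNonAssocRing α]
    (A B : Matrix l m α) (C : Matrix n' p' α) :
    (A - B) ⊗ₖ C = A ⊗ₖ C - B ⊗ₖ C := by
  ext
  simp [sub_mul]

theorem sum_gradient_eq_zero_of_forall_sum_le {ι : Type*} [Fintype ι] {p : ℕ}
    {f : ι → (Fin p → ℝ) → ℝ} {g : ι → (Fin p → ℝ) → Fin p → ℝ}
    (hgrad : ∀ i, IsGradient (f i) (g i)) {x : Fin p → ℝ}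
    (hmin : ∀ w, ∑ i, f i x ≤ ∑ i, f i w) : ∑ i, g i x = 0 := by
  have hmin' : IsLocalMin (fun w => ∑ i, f i w) x := Filter.Eventually.of_forall hmin
  have h0 := hmin'.hasFDerivAt_eq_zero (HasFDerivAt.fun_sum fun i _ => hgrad i x)
  ext t
  simpa [Pi.single_apply] using congrArg (· (Pi.single t 1)) h0

section Consensus

variable {n p : ℕ} {Rb : Matrix (Fin n) (Fin n) ℝ} {π : Fin n → ℝ}

theorem mul_of_const_rows (hrow : ∀ i, ∑ j, Rb i j = 1) :
    Rb * of (fun _ j => π j) = of fun _ j => π j := by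
  ext i j
  simp [mul_apply, ← Finset.sum_mul, hrow]

theorem of_const_rows_mul (hπstat : vecMul π Rb = π) :
    of (fun (_ : Fin n) j => π j) * Rb = of fun _ j => π j := by
  ext i j
  simpa [mul_apply, vecMul, dotProduct] using congrFun hπstat j

theorem of_const_rows_mul_self (hπsum : ∑ i, π i = 1) :
    of (fun (_ : Fin n) j => π j) * of (fun _ j => π j) = of fun _ j => π j := by
  ext i j
  simp [mul_apply, ← Finset.sum_mul, hπsum]

theorem RK_sub_VinfK_pow (hrow : ∀ i, ∑ j, Rb i j = 1) (hπsum : ∑ i, π i = 1)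
    (hπstat : vecMul π Rb = π) {k : ℕ} (hk : k ≠ 0) :
    (RK n p Rb - VinfK n p π) ^ k = (Rb ^ k - of fun _ j => π j) ⊗ₖ 1 := by
  rw [RK, VinfK, ← sub_kronecker, kronecker_one_pow,
    sub_pow_eq_pow_sub_of_mul_eq_self (mul_of_const_rows hrow) (of_const_rows_mul hπstat)
      (of_const_rows_mul_self hπsum) hk]

theorem abs_pow_apply_sub_le [NeZero p] {N : (Fin n × Fin p → ℝ) → ℝ} {κ : ℝ}
    (hrow : ∀ i, ∑ j, Rb i j = 1) (hπ : ∀ i, 0 ≤ π i) (hπsum : ∑ i, π i = 1)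
    (hπstat : vecMul π Rb = π) (hN : ∀ z, eucNorm z ≤ N z) (hNκ : ∀ z, N z ≤ κ * eucNorm z)
    (k : ℕ) (i j : Fin n) :
    |(Rb ^ k) i j - π j| ≤ κ * opNorm N (RK n p Rb - VinfK n p π) ^ k := by
  rcases eq_or_ne k 0 with rfl | hk
  -- `(R - V_∞)^0 = 1` is not `V(0) - V_∞`; instead `|δ_ij - π_j| ≤ 1 ≤ κ`.
  · have : Nonempty (Fin n × Fin p) := ⟨(i, 0)⟩
    have hκ := one_le_of_eucNorm_le_of_le_mul_eucNorm hN hNκ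
    have hπj : π j ≤ 1 := hπsum ▸ Finset.single_le_sum (fun l _ => hπ l) (Finset.mem_univ j)
    rw [pow_zero, pow_zero, mul_one, one_apply]
    split_ifs <;> rw [abs_le] <;> constructor <;> linarith [hπ j]
  · have hentry := abs_apply_le_of_eucNorm_mulVec_le
      (eucNorm_pow_mulVec_le hN hNκ (RK n p Rb - VinfK n p π) k) (i, 0) (j, 0)
    simpa [RK_sub_VinfK_pow hrow hπsum hπstat hk] using hentry

theorem tendsto_pow_of_abs_apply_sub_le {κ σ : ℝ}
    (hdev : ∀ k i j, |(Rb ^ k) i j - π j| ≤ κ * σ ^ k) (hσ0 : 0 ≤ σ) (hσ1 : σ < 1) :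
    Tendsto (Rb ^ ·) atTop (𝓝 (of fun _ j => π j)) := by
  refine tendsto_pi_nhds.2 fun i => tendsto_pi_nhds.2 fun j => ?_
  have hbound := (tendsto_pow_atTop_nhds_zero_of_lt_one hσ0 hσ1).const_mul κ
  rw [mul_zero] at hbound
  exact tendsto_sub_nhds_zero_iff.1 (squeeze_zero_norm (fun k => hdev k i j) hbound)

theorem tendsto_VK (hlim : Tendsto (Rb ^ ·) atTop (𝓝 (of fun _ j => π j))) :
    Tendsto (VK n p Rb) atTop (𝓝 (VinfK n p π)) :=
  (continuous_kronecker_one.tendsto _).comp hlim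

theorem tendsto_VtinvK (hlim : Tendsto (Rb ^ ·) atTop (𝓝 (of fun _ j => π j)))
    (hπ : ∀ i, π i ≠ 0) :
    Tendsto (VtinvK n p Rb) atTop (𝓝 (diagonal fun q : Fin n × Fin p => (π q.1)⁻¹)) :=
  (continuous_id.matrix_diagonal.tendsto _).comp <| tendsto_pi_nhds.2 fun q =>
    (((continuous_id.matrix_elem q.1 q.1).tendsto _).comp hlim).inv₀ (hπ q.1)

theorem pow_apply_self_pos (hRb : Rb ∈ rowStochastic ℝ (Fin n)) (hdiag : ∀ i, 0 < Rb i i)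
    (k : ℕ) (i : Fin n) : 0 < (Rb ^ k) i i := by
  induction k with
  | zero => simp
  | succ k ih =>
    rw [pow_succ, mul_apply]
    exact (mul_pos ih (hdiag i)).trans_le <|
      Finset.single_le_sum (f := fun l => (Rb ^ k) i l * Rb l i)
      (fun l _ => mul_nonneg (nonneg_of_mem_rowStochastic (pow_mem hRb k))
        (nonneg_of_mem_rowStochastic hRb)) (Finset.mem_univ i)

theorem vinfK_mulVec_apply (u : Fin n × Fin p → ℝ) (i : Fin n) (t : Fin p) :
    (VinfK n p π *ᵥ u) (i, t) = ∑ j, π j * u (j, t) := by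
  simp [VinfK, mulVec, dotProduct, Fintype.sum_prod_type, one_apply]

theorem eucNorm_vinfK_mulVec_diagonal_inv_gradf_le
    {g : Fin n → (Fin p → ℝ) → Fin p → ℝ} {L : ℝ} {xstar : Fin p → ℝ} (hπ : ∀ i, π i ≠ 0)
    (hL : 0 ≤ L) (hLip : ∀ i x x', eucNorm (g i x - g i x') ≤ L * eucNorm (x - x'))
    (hsum : ∑ i, g i xstar = 0) (z : Fin n × Fin p → ℝ) :
    eucNorm (VinfK n p π *ᵥ (diagonal (fun q : Fin n × Fin p => (π q.1)⁻¹) *ᵥ gradf g z)) ≤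
      n * L * eucNorm (z - VinfK n p π *ᵥ z)
        + n * L * eucNorm (VinfK n p π *ᵥ z - starVec n p xstar) := by
  set zbar : Fin p → ℝ := fun t => ∑ j, π j * z (j, t)
  set zj : Fin n → Fin p → ℝ := fun j t => z (j, t)
  have hsplit : ∑ j, g j (zj j) = ∑ j, (g j (zj j) - g j zbar) + ∑ j, (g j zbar - g j xstar) := by
    rw [← Finset.sum_add_distrib, Finset.sum_congr rfl fun j _ => sub_add_sub_cancel _ _ _,
      Finset.sum_sub_distrib, hsum, sub_zero]
  have hmain : eucNorm (VinfK n p π *ᵥ (diagonal (fun q : Fin n × Fin p => (π q.1)⁻¹) *ᵥ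
      gradf g z)) = √n * eucNorm (∑ j, g j (zj j)) := by
    rw [eucNorm_of_apply_eq_snd (c := ∑ j, g j (zj j)), Fintype.card_fin]
    rintro ⟨i, t⟩
    simp [vinfK_mulVec_apply, mulVec_diagonal, hπ, gradf, zj]
  have hstar : eucNorm (VinfK n p π *ᵥ z - starVec n p xstar) = √n * eucNorm (zbar - xstar) := by
    rw [eucNorm_of_apply_eq_snd (c := zbar - xstar), Fintype.card_fin]
    rintro ⟨i, t⟩
    simp [vinfK_mulVec_apply, starVec, zbar]
  have hdisagree : eucNorm (∑ j, (g j (zj j) - g j zbar)) ≤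
      L * (√n * eucNorm (z - VinfK n p π *ᵥ z)) := calc
    _ ≤ ∑ j, L * eucNorm (zj j - zbar) :=
        (eucNorm_sum_le _ _).trans (Finset.sum_le_sum fun j _ => hLip j _ _)
    _ = L * ∑ j, eucNorm (fun t => (z - VinfK n p π *ᵥ z) (j, t)) := by
        rw [Finset.mul_sum]
        congr! 3 with j
        ext t
        simp [vinfK_mulVec_apply, zj, zbar]
    _ ≤ _ := by
        simpa using mul_le_mul_of_nonneg_left (sum_eucNorm_blocks_le (z - VinfK n p π *ᵥ z)) hL
  have hoptimal : eucNorm (∑ j, (g j zbar - g j xstar)) ≤ n * (L * eucNorm (zbar - xstar)) := by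
    simpa using (eucNorm_sum_le Finset.univ _).trans
      (Finset.sum_le_sum fun j _ => hLip j zbar xstar)
  have hn : √n * √n = (n : ℝ) := Real.mul_self_sqrt (Nat.cast_nonneg n)
  rw [hmain, hstar, hsplit]
  calc √n * eucNorm (∑ j, (g j (zj j) - g j zbar) + ∑ j, (g j zbar - g j xstar))
      ≤ √n * (L * (√n * eucNorm (z - VinfK n p π *ᵥ z)) + n * (L * eucNorm (zbar - xstar))) :=
        mul_le_mul_of_nonneg_left ((eucNorm_add_le _ _).trans (add_le_add hdisagree hoptimal))
          (Real.sqrt_nonneg _)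
    _ = _ := by linear_combination L * eucNorm (z - VinfK n p π *ᵥ z) * hn

theorem eucNorm_vinfK_mulVec_diagonal_inv_pow_sub_inv_le [NeZero p] {κ σ : ℝ}
    (hRb : Rb ∈ rowStochastic ℝ (Fin n))
    (hdiag : ∀ i, 0 < Rb i i) (hπ : ∀ i, π i ≠ 0)
    (hdev : ∀ k i j, |(Rb ^ k) i j - π j| ≤ κ * σ ^ k) (hσ0 : 0 ≤ σ) (hσ1 : σ < 1) (k : ℕ)
    (z : Fin n × Fin p → ℝ) :
    eucNorm (VinfK n p π *ᵥ
        (diagonal (fun q : Fin n × Fin p => ((Rb ^ k) q.1 q.1)⁻¹ - (π q.1)⁻¹) *ᵥ z)) ≤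
      (⨆ k, specNorm (VK n p Rb k)) * (⨆ k, specNorm (VtinvK n p Rb k)) ^ 2 * (κ * σ ^ k)
        * eucNorm z := by
  have hlim := tendsto_pow_of_abs_apply_sub_le hdev hσ0 hσ1
  have hvk : ∀ k, specNorm (VK n p Rb k) ≤ ⨆ k, specNorm (VK n p Rb k) :=
    le_ciSup (bddAbove_range_specNorm_of_tendsto (tendsto_VK hlim))
  have hvtk : ∀ k, specNorm (VtinvK n p Rb k) ≤ ⨆ k, specNorm (VtinvK n p Rb k) :=
    le_ciSup (bddAbove_range_specNorm_of_tendsto (tendsto_VtinvK hlim hπ))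
  have hπinv : ∀ i, |(π i)⁻¹| ≤ ⨆ k, specNorm (VtinvK n p Rb k) := fun i => by
    simpa using abs_apply_le_of_eucNorm_mulVec_le
      (eucNorm_mulVec_le_of_tendsto (tendsto_VtinvK hlim hπ) hvtk) (i, 0) (i, 0)
  have hpowinv : ∀ i, |((Rb ^ k) i i)⁻¹| ≤ ⨆ k, specNorm (VtinvK n p Rb k) := fun i => by
    simpa [VtinvK] using (abs_apply_le_specNorm (VtinvK n p Rb k) (i, 0) (i, 0)).trans (hvtk k)
  exact eucNorm_mulVec_diagonal_inv_sub_inv_le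
    (eucNorm_mulVec_le_of_tendsto (tendsto_VK hlim) hvk) ((specNorm_nonneg _).trans (hvk 0))
    (fun q => (pow_apply_self_pos hRb hdiag k q.1).ne') (fun q => hπ q.1)
    (fun q => hpowinv q.1) (fun q => hπinv q.1)
    (fun q => (abs_sub_comm _ _).trans_le (hdev k q.1 q.1)) z

end Consensus

theorem stmt10_general (n p : ℕ) (hn : 1 ≤ n) (hp : 1 ≤ p) (Rb : Matrix (Fin n) (Fin n) ℝ)
    (hnonneg : ∀ i j, 0 ≤ Rb i j) (hrow : ∀ i, ∑ j, Rb i j = 1)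
    (hdiag : ∀ i, 0 < Rb i i)
    (π : Fin n → ℝ) (hπpos : ∀ i, 0 < π i) (hπsum : ∑ i, π i = 1)
    (hπstat : Matrix.vecMul π Rb = π)
    (f : Fin n → (Fin p → ℝ) → ℝ) (g : Fin n → (Fin p → ℝ) → Fin p → ℝ)
    (μ L : ℝ) (hμ : 0 < μ) (hμL : μ ≤ L)
    (hgrad : ∀ i, IsGradient (f i) (g i))
    (hLip : ∀ i x x', eucNorm (g i x - g i x') ≤ L * eucNorm (x - x'))
    (xstar : Fin p → ℝ)
    (hmin : ∀ w, ∑ i, f i xstar ≤ ∑ i, f i w)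
    (NR NC : (Fin n × Fin p → ℝ) → ℝ)
    (hNRge : ∀ z, eucNorm z ≤ NR z) (hNCge : ∀ z, eucNorm z ≤ NC z)
    (κ₃ : ℝ)
    (hκ₃R : ∀ z, NR z ≤ κ₃ * eucNorm z)
    (v vt : ℝ) (hv : v = ⨆ k : ℕ, specNorm (VK n p Rb k))
    (hvt : vt = ⨆ k : ℕ, specNorm (VtinvK n p Rb k))
    (σR : ℝ) (hσRdef : σR = opNorm NR (RK n p Rb - VinfK n p π))
    (hσR1 : σR < 1)
    :
    ∀ (k : ℕ) (z : Fin n × Fin p → ℝ),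
      eucNorm ((VinfK n p π).mulVec ((VtinvK n p Rb k).mulVec (gradf g z))) ≤
        v * vt ^ 2 * Real.sqrt n * κ₃ * σR ^ k * eucNorm (gradf g z)
          + n * L * NC (z - (VinfK n p π).mulVec z)
          + n * L * eucNorm ((VinfK n p π).mulVec z - starVec n p xstar) := by
  intro k z
  subst hv hvt hσRdef
  have : NeZero p := ⟨by omega⟩
  have hπ : ∀ i, π i ≠ 0 := fun i => (hπpos i).ne'
  have hdev := abs_pow_apply_sub_le hrow (fun i => (hπpos i).le) hπsum hπstat hNRge hκ₃R
  have herr := eucNorm_vinfK_mulVec_diagonal_inv_pow_sub_inv_le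
    (mem_rowStochastic_iff_sum.2 ⟨hnonneg, hrow⟩) hdiag hπ hdev (opNorm_nonneg hNRge _) hσR1 k
    (gradf g z)
  have hL : 0 ≤ L := hμ.le.trans hμL
  have hcons := eucNorm_vinfK_mulVec_diagonal_inv_gradf_le hπ hL hLip
    (sum_gradient_eq_zero_of_forall_sum_le hgrad hmin) z
  have hsplit : VtinvK n p Rb k = diagonal (fun q : Fin n × Fin p => (π q.1)⁻¹)
      + diagonal fun q => ((Rb ^ k) q.1 q.1)⁻¹ - (π q.1)⁻¹ := by
    rw [diagonal_add]
    simp [VtinvK]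
  rw [hsplit, add_mulVec, mulVec_add]
  refine (eucNorm_add_le _ _).trans ?_
  have hsqrt : 1 ≤ √(n : ℝ) := Real.one_le_sqrt.2 (by exact_mod_cast hn)
  have hNC := mul_le_mul_of_nonneg_left (hNCge (z - VinfK n p π *ᵥ z)) (mul_nonneg n.cast_nonneg hL)
  have herr' := herr.trans (le_mul_of_one_le_right ((eucNorm_nonneg _).trans herr) hsqrt)
  linarith

/-- Lemma 4(a): for every `k` and `z`, with `ẑ = V_∞ z`,
`‖V_∞ Ṽ(k)⁻¹ ∇f(z)‖ ≤ v ṽ² √n κ₃ σ_R^k ‖∇f(z)‖ + nL ‖z − ẑ‖_C + nL ‖ẑ − x*_vec‖`. -/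
theorem stmt10 (n p : ℕ) (hn : 1 ≤ n) (hp : 1 ≤ p) (Rb : Matrix (Fin n) (Fin n) ℝ)
    (hnonneg : ∀ i j, 0 ≤ Rb i j) (hrow : ∀ i, ∑ j, Rb i j = 1)
    (hdiag : ∀ i, 0 < Rb i i)
    (hirr : ∀ i j, ∃ k : ℕ, 0 < (Rb ^ k) i j)
    (π : Fin n → ℝ) (hπpos : ∀ i, 0 < π i) (hπsum : ∑ i, π i = 1)
    (hπstat : Matrix.vecMul π Rb = π)
    (f : Fin n → (Fin p → ℝ) → ℝ) (g : Fin n → (Fin p → ℝ) → Fin p → ℝ)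
    (μ L : ℝ) (hμ : 0 < μ) (hμL : μ ≤ L)
    (hgrad : ∀ i, IsGradient (f i) (g i))
    (hLip : ∀ i x x', eucNorm (g i x - g i x') ≤ L * eucNorm (x - x'))
    (hsc : ∀ i x x',
      f i x + (∑ j, g i x j * (x' j - x j)) + μ / 2 * eucNorm (x' - x) ^ 2 ≤ f i x')
    (xstar : Fin p → ℝ)
    (hmin : ∀ w, ∑ i, f i xstar ≤ ∑ i, f i w)
    (huniq : ∀ w, (∀ w', ∑ i, f i w ≤ ∑ i, f i w') → w = xstar)
    (NR NC : (Fin n × Fin p → ℝ) → ℝ)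
    (hNRtri : ∀ z w, NR (z + w) ≤ NR z + NR w)
    (hNRhom : ∀ (a : ℝ) z, NR (a • z) = |a| * NR z)
    (hNRdef : ∀ z, NR z = 0 ↔ z = 0)
    (hNCtri : ∀ z w, NC (z + w) ≤ NC z + NC w)
    (hNChom : ∀ (a : ℝ) z, NC (a • z) = |a| * NC z)
    (hNCdef : ∀ z, NC z = 0 ↔ z = 0)
    (hNRge : ∀ z, eucNorm z ≤ NR z) (hNCge : ∀ z, eucNorm z ≤ NC z)
    (κ₁ κ₂ κ₃ κ₄ : ℝ) (hκ₁ : 0 < κ₁) (hκ₂ : 0 < κ₂) (hκ₃ : 0 < κ₃) (hκ₄ : 0 < κ₄)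
    (hκ₁R : ∀ z, NR z ≤ κ₁ * NC z) (hκ₂C : ∀ z, NC z ≤ κ₂ * NR z)
    (hκ₃R : ∀ z, NR z ≤ κ₃ * eucNorm z) (hκ₄C : ∀ z, NC z ≤ κ₄ * eucNorm z)
    (v vt : ℝ) (hv : v = ⨆ k : ℕ, specNorm (VK n p Rb k))
    (hvt : vt = ⨆ k : ℕ, specNorm (VtinvK n p Rb k))
    (σR : ℝ) (hσRdef : σR = opNorm NR (RK n p Rb - VinfK n p π))
    (hσR0 : 0 < σR) (hσR1 : σR < 1)
    :
    ∀ (k : ℕ) (z : Fin n × Fin p → ℝ),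
      eucNorm ((VinfK n p π).mulVec ((VtinvK n p Rb k).mulVec (gradf g z))) ≤
        v * vt ^ 2 * Real.sqrt n * κ₃ * σR ^ k * eucNorm (gradf g z)
          + n * L * NC (z - (VinfK n p π).mulVec z)
          + n * L * eucNorm ((VinfK n p π).mulVec z - starVec n p xstar) :=
  stmt10_general n p hn hp Rb hnonneg hrow hdiag π hπpos hπsum hπstat f g μ L hμ hμL hgrad hLip
    xstar hmin NR NC hNRge hNCge κ₃ hκ₃R v vt hv hvt σR hσRdef hσR1
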